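/- Let N ≥ 2 be an integer, λ_1, …, λ_N real numbers, and c a real number. Let E(λ) be the N×N matrix whose (k, i) entry is λ_i^{k−1} for 1 ≤ k ≤ N−1, and whose last row has (N, i) entry e^{c λ_i}; and for each integer k ≥ 0 let M_k(λ) be the N×N matrix with the same first N−1 rows and with last row (N, i) entry λ_i^{N−1+k}. Then det(E(λ)) = Σ_{k=0}^{∞} (c^{N−1+k} / (N−1+k)!) · det(M_k(λ)), the series being absolutely convergent. -/

import Mathlib

/-!
The determinant is a continuous linear function of the last row, so expanding each entry
`exp (c λ_j)` of that row in its power series expands `det E(λ)` into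
`∑ₘ cᵐ / m! · det (last row λ_jᵐ)`. For `m < N - 1` the last row repeats row `m` of the
Vandermonde matrix, so those terms vanish, and reindexing the rest gives the series.
-/

open Matrix

theorem Matrix.hasSum_det_updateRow {ι n R : Type*} [Fintype n] [DecidableEq n] [CommRing R]
    [TopologicalSpace R] [IsTopologicalRing R] (A : Matrix n n R) (i : n) {f : ι → n → R}
    {v : n → R} (h : HasSum f v) :
    HasSum (fun m => (A.updateRow i (f m)).det) (A.updateRow i v).det :=
  h.map (detRowAlternating.toMultilinearMap.toLinearMap A i)
    (LinearMap.continuous_on_pi _)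

theorem Real.hasSum_exp_mul_pi {n : Type*} (c : ℝ) (x : n → ℝ) :
    HasSum (fun m : ℕ => (c ^ m / m.factorial : ℝ) • fun j => x j ^ m)
      fun j => Real.exp (c * x j) := by
  refine Pi.hasSum.mpr fun j => ?_
  simpa [Real.exp_eq_exp_ℝ, mul_pow, mul_div_right_comm] using
    NormedSpace.expSeries_div_hasSum_exp (c * x j)

theorem Matrix.hasSum_det_updateRow_exp {n : Type*} [Fintype n] [DecidableEq n]
    (A : Matrix n n ℝ) (i : n) (c : ℝ) (x : n → ℝ) :
    HasSum (fun m : ℕ => c ^ m / m.factorial * (A.updateRow i fun j => x j ^ m).det)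
      (A.updateRow i fun j => Real.exp (c * x j)).det := by
  simpa only [det_updateRow_smul] using A.hasSum_det_updateRow i (Real.hasSum_exp_mul_pi c x)

theorem Matrix.transpose_vandermonde_updateRow_last {R : Type*} [CommRing R] {n : ℕ}
    (x v : Fin (n + 1) → R) :
    (vandermonde x)ᵀ.updateRow (Fin.last n) v =
      Matrix.of fun i j : Fin (n + 1) => if (i : ℕ) < n then x j ^ (i : ℕ) else v j := by
  ext i j
  rcases Fin.eq_castSucc_or_eq_last i with ⟨i, rfl⟩ | rfl <;> simp [vandermonde_apply]

theorem Matrix.det_transpose_vandermonde_updateRow_last_pow {R : Type*} [CommRing R] {n m : ℕ}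
    (x : Fin (n + 1) → R) (hm : m < n) :
    ((vandermonde x)ᵀ.updateRow (Fin.last n) fun j => x j ^ m).det = 0 :=
  det_updateRow_eq_zero (i := ⟨m, by omega⟩) (Fin.ne_last_of_lt (b := Fin.last n) hm)

theorem stmt_4 (N : ℕ) (hN : 2 ≤ N) (lam : Fin N → ℝ) (c : ℝ) :
    HasSum
      (fun k : ℕ => c ^ (N - 1 + k) / ((N - 1 + k).factorial : ℝ) *
        Matrix.det (Matrix.of fun i j : Fin N =>
          if (i : ℕ) < N - 1 then lam j ^ (i : ℕ) else lam j ^ (N - 1 + k)))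
      (Matrix.det (Matrix.of fun i j : Fin N =>
        if (i : ℕ) < N - 1 then lam j ^ (i : ℕ) else Real.exp (c * lam j))) := by
  obtain ⟨n, rfl⟩ : ∃ n, N = n + 1 := ⟨N - 1, by omega⟩
  simp only [Nat.add_sub_cancel, ← transpose_vandermonde_updateRow_last lam]
  have h := (vandermonde lam)ᵀ.hasSum_det_updateRow_exp (Fin.last n) c lam
  rw [← hasSum_nat_add_iff' n, Finset.sum_eq_zero fun m hm => by
    rw [det_transpose_vandermonde_updateRow_last_pow lam (Finset.mem_range.mp hm), mul_zero],
    sub_zero] at h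
  simpa only [add_comm] using h
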